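/- Let b > 0 and b ≤ c ≤ b+1. Then for every H¹ function v on [b,b+1] satisfying ∫_b^{b+1} v(r)·r dr = 0, one has v(c)² ≤ Φ(b,c) · ∫_b^{b+1} v'(r)² · r dr, where Φ(b,c) := (1/(4(2b+1)²))·( 4(b+1)⁴·log(b+1) − 4b⁴·log b − (2b+1)·( 3 + 6b + 6b² − 4c² + 4(2b²+2b+1)·log c ) ). -/

import Mathlib

open MeasureTheory Set

/-- The sharp constant `Φ(b,c)` in the weighted Poincaré inequality on `[b, b+1]`. -/
noncomputable def Phi (b c : ℝ) : ℝ :=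
  (1 / (4 * (2 * b + 1) ^ 2)) *
    (4 * (b + 1) ^ 4 * Real.log (b + 1) - 4 * b ^ 4 * Real.log b
      - (2 * b + 1) * (3 + 6 * b + 6 * b ^ 2 - 4 * c ^ 2
          + 4 * (2 * b ^ 2 + 2 * b + 1) * Real.log c))

/-!
Since `∫ v r * r = 0`, we have `v c * (2b+1)/2 = ∫ (v c - v r) r dr`. Integrating by parts on
`[b, c]` against `(r² - b²)/2` and on `[c, b+1]` against `(r² - (b+1)²)/2` (both primitives of `r`
vanishing at the outer endpoint) writes this as `∫ v' K` for a piecewise polynomial kernel `K`.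
The weighted Cauchy–Schwarz inequality `(∫ v' K)² ≤ ∫ v'² r · ∫ K² / r` then gives the claim,
since `∫ K² / r = ((2b+1)/2)² Φ(b,c)` in closed form.
-/

theorem integral_primitive_mul_id {f : ℝ → ℝ} {a d k e : ℝ}
    (hf : IntervalIntegrable f volume a d) (hk : k ∈ uIcc a d) :
    ∫ r in a..d, (∫ t in k..r, f t) * r =
      (∫ t in k..d, f t) * ((d ^ 2 - e ^ 2) / 2) - (∫ t in k..a, f t) * ((a ^ 2 - e ^ 2) / 2)
        - ∫ r in a..d, f r * ((r ^ 2 - e ^ 2) / 2) := by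
  have hφ : AbsolutelyContinuousOnInterval (fun r : ℝ => (r ^ 2 - e ^ 2) / 2) a d :=
    ContDiffOn.absolutelyContinuousOnInterval (by fun_prop)
  have hparts := (hf.absolutelyContinuousOnInterval_intervalIntegral hk
    ).integral_mul_deriv_eq_deriv_mul hφ
  have hderiv : ∀ r : ℝ, deriv (fun r : ℝ => (r ^ 2 - e ^ 2) / 2) r = r := fun r => by
    simp
  simp only [hderiv] at hparts
  rw [hparts]
  congr 1
  refine intervalIntegral.integral_congr_ae ?_
  filter_upwards [hf.ae_hasDerivAt_integral] with x hx hxI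
  rw [(hx (uIoc_subset_uIcc hxI) k hk).deriv]

theorem sq_integral_mul_le_weighted {α : Type*} [MeasurableSpace α] {μ : Measure α}
    {f h w : α → ℝ}
    (hw : ∀ᵐ x ∂μ, 0 < w x) (hf : Integrable (fun x => f x ^ 2 * w x) μ)
    (hh : Integrable (fun x => h x ^ 2 / w x) μ) (hfh : Integrable (fun x => f x * h x) μ) :
    (∫ x, f x * h x ∂μ) ^ 2 ≤ (∫ x, f x ^ 2 * w x ∂μ) * ∫ x, h x ^ 2 / w x ∂μ := by
  have hquad : ∀ s : ℝ, 0 ≤ (∫ x, f x ^ 2 * w x ∂μ) * (s * s) + 2 * (∫ x, f x * h x ∂μ) * s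
      + ∫ x, h x ^ 2 / w x ∂μ := fun s => by
    rw [← integral_mul_const, ← integral_const_mul, ← integral_mul_const,
      ← integral_add (hf.mul_const _) ((hfh.const_mul 2).mul_const s), ← integral_add _ hh]
    · refine integral_nonneg_of_ae ?_
      filter_upwards [hw] with x hx
      calc (0 : ℝ) ≤ w x * (s * f x + h x / w x) ^ 2 := by positivity
        _ = _ := by field_simp; ring
    · exact (hf.mul_const _).add ((hfh.const_mul 2).mul_const s)
  have := discrim_le_zero hquad
  rw [discrim] at this
  nlinarith

theorem intervalIntegral_ite_le {f₁ f₂ : ℝ → ℝ} {a c d : ℝ} (hac : a ≤ c) (hcd : c ≤ d)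
    (h₁ : IntervalIntegrable f₁ volume a c) (h₂ : IntervalIntegrable f₂ volume c d) :
    IntervalIntegrable (fun t => if t ≤ c then f₁ t else f₂ t) volume a d ∧
      ∫ t in a..d, (if t ≤ c then f₁ t else f₂ t) = (∫ t in a..c, f₁ t) + ∫ t in c..d, f₂ t := by
  have e₁ : EqOn (fun t => if t ≤ c then f₁ t else f₂ t) f₁ (uIoc a c) := fun t ht => by
    rw [uIoc_of_le hac] at ht
    simp [ht.2]
  have e₂ : EqOn (fun t => if t ≤ c then f₁ t else f₂ t) f₂ (uIoc c d) := fun t ht => by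
    rw [uIoc_of_le hcd] at ht
    simp [not_le.2 ht.1]
  have i₁ := (intervalIntegrable_congr e₁).2 h₁
  have i₂ := (intervalIntegrable_congr e₂).2 h₂
  refine ⟨i₁.trans i₂, ?_⟩
  rw [← intervalIntegral.integral_add_adjacent_intervals i₁ i₂,
    intervalIntegral.integral_congr_ae (Filter.Eventually.of_forall e₁),
    intervalIntegral.integral_congr_ae (Filter.Eventually.of_forall e₂)]

theorem integral_sq_sub_sq_div {a x y : ℝ} (hx : 0 < x) (hxy : x ≤ y) :
    IntervalIntegrable (fun t => ((t ^ 2 - a ^ 2) / 2) ^ 2 / t) volume x y ∧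
      ∫ t in x..y, ((t ^ 2 - a ^ 2) / 2) ^ 2 / t =
        ((y ^ 4 / 4 - a ^ 2 * y ^ 2 + a ^ 4 * Real.log y)
          - (x ^ 4 / 4 - a ^ 2 * x ^ 2 + a ^ 4 * Real.log x)) / 4 := by
  have hpos : ∀ t ∈ uIcc x y, 0 < t := fun t ht => hx.trans_le (by
    rw [uIcc_of_le hxy] at ht; exact ht.1)
  have hint : IntervalIntegrable (fun t => ((t ^ 2 - a ^ 2) / 2) ^ 2 / t) volume x y :=
    (ContinuousOn.div (by fun_prop) continuousOn_id fun t ht => (hpos t ht).ne').intervalIntegrable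
  refine ⟨hint, ?_⟩
  rw [intervalIntegral.integral_eq_sub_of_hasDerivAt (f := fun t =>
    (t ^ 4 / 4 - a ^ 2 * t ^ 2 + a ^ 4 * Real.log t) / 4) (fun t ht => ?_) hint]
  · ring
  have hderiv := ((((hasDerivAt_pow 4 t).div_const 4).sub
    ((hasDerivAt_pow 2 t).const_mul (a ^ 2))).add
      ((Real.hasDerivAt_log (hpos t ht).ne').const_mul (a ^ 4))).div_const 4
  refine hderiv.congr_deriv ?_
  have := (hpos t ht).ne'
  field_simp
  ring

noncomputable def poincareKernel (b c t : ℝ) : ℝ :=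
  if t ≤ c then (t ^ 2 - b ^ 2) / 2 else (t ^ 2 - (b + 1) ^ 2) / 2

theorem integral_sq_poincareKernel_div {b c : ℝ} (hb : 0 < b) (hc : c ∈ Icc b (b + 1)) :
    IntervalIntegrable (fun t => poincareKernel b c t ^ 2 / t) volume b (b + 1) ∧
      ∫ t in b..(b + 1), poincareKernel b c t ^ 2 / t = ((2 * b + 1) / 2) ^ 2 * Phi b c := by
  obtain ⟨i₁, e₁⟩ := integral_sq_sub_sq_div (a := b) hb hc.1
  obtain ⟨i₂, e₂⟩ := integral_sq_sub_sq_div (a := b + 1) (hb.trans_le hc.1) hc.2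
  have hK : (fun t => poincareKernel b c t ^ 2 / t) = fun t =>
      if t ≤ c then ((t ^ 2 - b ^ 2) / 2) ^ 2 / t else ((t ^ 2 - (b + 1) ^ 2) / 2) ^ 2 / t := by
    ext t; unfold poincareKernel; split_ifs <;> rfl
  obtain ⟨hint, hsplit⟩ := intervalIntegral_ite_le hc.1 hc.2 i₁ i₂
  rw [hK]
  refine ⟨hint, ?_⟩
  rw [hsplit, e₁, e₂, Phi]
  field_simp
  ring

theorem Phi_nonneg {b c : ℝ} (hb : 0 < b) (hc : c ∈ Icc b (b + 1)) : 0 ≤ Phi b c := by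
  have hint : 0 ≤ ∫ t in b..(b + 1), poincareKernel b c t ^ 2 / t :=
    intervalIntegral.integral_nonneg (by linarith) fun t ht =>
      div_nonneg (sq_nonneg _) (hb.le.trans ht.1)
  rw [(integral_sq_poincareKernel_div hb hc).2] at hint
  exact nonneg_of_mul_nonneg_right hint (by positivity)

theorem integral_mul_poincareKernel {b c : ℝ} {g : ℝ → ℝ} (hc : c ∈ Icc b (b + 1))
    (hg : IntervalIntegrable g volume b (b + 1)) :
    IntervalIntegrable (fun t => g t * poincareKernel b c t) volume b (b + 1) ∧
      ∫ t in b..(b + 1), g t * poincareKernel b c t =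
        (∫ t in b..c, g t * ((t ^ 2 - b ^ 2) / 2))
          + ∫ t in c..(b + 1), g t * ((t ^ 2 - (b + 1) ^ 2) / 2) := by
  have hc' : c ∈ uIcc b (b + 1) := by rwa [uIcc_of_le (by linarith)]
  have hK : (fun t => g t * poincareKernel b c t) = fun t =>
      if t ≤ c then g t * ((t ^ 2 - b ^ 2) / 2) else g t * ((t ^ 2 - (b + 1) ^ 2) / 2) := by
    ext t; unfold poincareKernel; split_ifs <;> rfl
  rw [hK]
  exact intervalIntegral_ite_le hc.1 hc.2
    ((hg.mono_set (uIcc_subset_uIcc left_mem_uIcc hc')).mul_continuousOn (by fun_prop))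
    ((hg.mono_set (uIcc_subset_uIcc hc' right_mem_uIcc)).mul_continuousOn (by fun_prop))

theorem mul_eq_integral_mul_poincareKernel {b c : ℝ} {v g : ℝ → ℝ} (hc : c ∈ Icc b (b + 1))
    (hg : IntervalIntegrable g volume b (b + 1))
    (hvg : ∀ x ∈ Icc b (b + 1), v x = v b + ∫ t in b..x, g t)
    (hmean : ∫ r in b..(b + 1), v r * r = 0) :
    v c * ((2 * b + 1) / 2) = ∫ t in b..(b + 1), g t * poincareKernel b c t := by
  have hc' : c ∈ uIcc b (b + 1) := by rwa [uIcc_of_le (by linarith)]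
  have hg₁ : IntervalIntegrable g volume b c := hg.mono_set (uIcc_subset_uIcc left_mem_uIcc hc')
  have hg₂ : IntervalIntegrable g volume c (b + 1) :=
    hg.mono_set (uIcc_subset_uIcc hc' right_mem_uIcc)
  set P := fun x => ∫ t in c..x, g t
  have hvP : EqOn (fun r => v r * r) (fun r => v c * r + P r * r) (uIcc b (b + 1)) := by
    intro r hr
    rw [uIcc_of_le (by linarith)] at hr
    have hr' : r ∈ uIcc b (b + 1) := by rwa [uIcc_of_le (by linarith)]
    show v r * r = v c * r + (∫ t in c..r, g t) * r
    rw [← intervalIntegral.integral_interval_sub_left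
      (hg.mono_set (uIcc_subset_uIcc left_mem_uIcc hr')) hg₁, hvg r hr, hvg c hc]
    ring
  have hP : IntervalIntegrable (fun r => P r * r) volume b (b + 1) :=
    ((hg.absolutelyContinuousOnInterval_intervalIntegral hc').continuousOn.mul
      continuousOn_id).intervalIntegrable
  have hmoment : ∫ r in b..(b + 1), P r * r = -(∫ t in b..c, g t * ((t ^ 2 - b ^ 2) / 2))
      - ∫ t in c..(b + 1), g t * ((t ^ 2 - (b + 1) ^ 2) / 2) := by
    rw [← intervalIntegral.integral_add_adjacent_intervals
        (hP.mono_set (uIcc_subset_uIcc left_mem_uIcc hc'))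
        (hP.mono_set (uIcc_subset_uIcc hc' right_mem_uIcc)),
      integral_primitive_mul_id (e := b) hg₁ right_mem_uIcc,
      integral_primitive_mul_id (e := b + 1) hg₂ left_mem_uIcc]
    simp [sub_eq_add_neg]
  rw [intervalIntegral.integral_congr hvP, intervalIntegral.integral_add
      ((continuous_const_mul (v c)).intervalIntegrable _ _) hP,
    intervalIntegral.integral_const_mul, integral_id, hmoment] at hmean
  rw [(integral_mul_poincareKernel hc hg).2]
  linarith

theorem sq_le_Phi_mul_integral_of_intervalIntegrable {b c : ℝ} {v g : ℝ → ℝ} (hb : 0 < b)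
    (hc : c ∈ Icc b (b + 1)) (hg : IntervalIntegrable g volume b (b + 1))
    (hg2 : IntervalIntegrable (fun t => g t ^ 2) volume b (b + 1))
    (hvg : ∀ x ∈ Icc b (b + 1), v x = v b + ∫ t in b..x, g t)
    (hmean : ∫ r in b..(b + 1), v r * r = 0) :
    v c ^ 2 ≤ Phi b c * ∫ r in b..(b + 1), g r ^ 2 * r := by
  have hbb : b ≤ b + 1 := by linarith
  obtain ⟨hKi, hK⟩ := integral_sq_poincareKernel_div hb hc
  obtain ⟨hgKi, -⟩ := integral_mul_poincareKernel hc hg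
  have hcs := sq_integral_mul_le_weighted (μ := volume.restrict (Ioc b (b + 1))) (w := fun t => t)
    ((ae_restrict_mem measurableSet_Ioc).mono fun t ht => hb.trans ht.1)
    (hg2.mul_continuousOn continuousOn_id).1 hKi.1 hgKi.1
  simp only [← intervalIntegral.integral_of_le hbb, hK,
    ← mul_eq_integral_mul_poincareKernel hc hg hvg hmean] at hcs
  have hM : 0 < ((2 * b + 1) / 2) ^ 2 := by positivity
  refine le_of_mul_le_mul_right ?_ hM
  linarith [mul_pow (v c) ((2 * b + 1) / 2) 2]

theorem integrableOn_Ioc_of_forall_lt {a m : ℝ} {g : ℝ → ℝ}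
    (hg : IntegrableOn (fun t => g t ^ 2) (Ioc a m))
    (h : ∀ x < m, IntegrableOn g (Ioc a x)) : IntegrableOn g (Ioc a m) := by
  rw [integrableOn_Ioc_iff_integrableOn_Ioo] at hg ⊢
  have hunion : Ioo a m = ⋃ q : {q : ℚ // (q : ℝ) < m}, Ioc a (q : ℝ) := by
    ext t
    simp only [mem_Ioo, mem_iUnion, mem_Ioc, Subtype.exists, exists_prop]
    constructor
    · rintro ⟨hat, htm⟩
      obtain ⟨q, htq, hqm⟩ := exists_rat_btwn htm
      exact ⟨q, hqm, hat, htq.le⟩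
    · rintro ⟨q, hqm, hat, htq⟩
      exact ⟨hat, htq.trans_lt hqm⟩
  have hmeas : AEStronglyMeasurable g (volume.restrict (Ioo a m)) := by
    rw [hunion, aestronglyMeasurable_iUnion_iff]
    exact fun q => (h q q.2).aestronglyMeasurable
  exact ((memLp_two_iff_integrable_sq hmeas).2 hg).integrable one_le_two

/-- `g` need not be measurable, and `∫ t in a..x, g t` is `0` as soon as `g` is not integrable on
`(a, x]`. So `v` is constant beyond the supremum `m` of the `x` where `g` is integrable, hence by
continuity `∫ t in a..m, g t = 0` if `m < d`, and `g` restricted to `(a, m]` still represents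
`v`. -/
theorem exists_intervalIntegrable_of_integrableOn_sq {a d : ℝ} {v g : ℝ → ℝ} (had : a ≤ d)
    (hv : ContinuousOn v (Icc a d)) (hg : IntegrableOn (fun t => g t ^ 2) (Ioc a d))
    (hvg : ∀ x ∈ Icc a d, v x = v a + ∫ t in a..x, g t) :
    ∃ g' : ℝ → ℝ, IntervalIntegrable g' volume a d ∧ (∀ t, g' t ^ 2 ≤ g t ^ 2) ∧
      ∀ x ∈ Icc a d, v x = v a + ∫ t in a..x, g' t := by
  set S := {x | x ∈ Icc a d ∧ IntegrableOn g (Ioc a x)}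
  have haS : a ∈ S := ⟨left_mem_Icc.2 had, by simp⟩
  have hS : BddAbove S := ⟨d, fun x hx => hx.1.2⟩
  set m := sSup S
  have ham : a ≤ m := le_csSup hS haS
  have hmd : m ≤ d := csSup_le ⟨a, haS⟩ fun x hx => hx.1.2
  have hgm : IntegrableOn g (Ioc a m) :=
    integrableOn_Ioc_of_forall_lt (hg.mono_set (Ioc_subset_Ioc_right hmd)) fun x hx => by
      obtain ⟨y, hyS, hxy⟩ := exists_lt_of_lt_csSup ⟨a, haS⟩ hx
      exact hyS.2.mono_set (Ioc_subset_Ioc_right hxy.le)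
  have hconst : EqOn v (fun _ => v a) (Ioc m d) := fun x hx => by
    have hxI : x ∈ Icc a d := ⟨ham.trans hx.1.le, hx.2⟩
    have hgx : ¬IntervalIntegrable g volume a x := fun hgx =>
      (le_csSup hS ⟨hxI, hgx.1⟩).not_gt hx.1
    simp [hvg x hxI, intervalIntegral.integral_undef hgx]
  have hvm : m < d → v m = v a := fun hmd' =>
    hconst.of_subset_closure (hv.mono (Icc_subset_Icc_left ham)) continuousOn_const
      Ioc_subset_Icc_self (closure_Ioc hmd'.ne).superset (left_mem_Icc.2 hmd)
  refine ⟨{t | t ≤ m}.indicator g, ?_, fun t => ?_, fun x hx => ?_⟩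
  · rw [intervalIntegrable_iff_integrableOn_Ioc_of_le had]
    refine (integrableOn_indicator_iff (s := Iic m) measurableSet_Iic).2 ?_
    rwa [Iic_inter_Ioc_of_le hmd]
  · by_cases ht : t ≤ m <;> simp [ht, sq_nonneg]
  · rcases le_or_gt x m with hxm | hxm
    · rw [hvg x hx]
      refine congrArg _ (intervalIntegral.integral_congr fun t ht => ?_)
      rw [uIcc_of_le hx.1] at ht
      exact (indicator_of_mem (s := Iic m) (ht.2.trans hxm) g).symm
    · have hvm' := hvg m ⟨ham, hmd⟩
      rw [hvm (hxm.trans_le hx.2)] at hvm'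
      rw [intervalIntegral.integral_indicator ⟨ham, hxm.le⟩, hconst ⟨hxm, hx.2⟩]
      linarith

theorem pointwise_poincare (b c : ℝ) (hb : 0 < b) (hc : c ∈ Set.Icc b (b + 1))
    (v g : ℝ → ℝ) (hv : ContinuousOn v (Set.Icc b (b + 1)))
    (hg : MeasureTheory.IntegrableOn (fun t => g t ^ 2) (Set.Ioo b (b + 1)))
    (hvg : ∀ x ∈ Set.Icc b (b + 1), v x = v b + ∫ t in b..x, g t)
    (hmean : (∫ r in b..(b + 1), v r * r) = 0) :
    v c ^ 2 ≤ Phi b c * ∫ r in b..(b + 1), (g r) ^ 2 * r := by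
  have hbb : b ≤ b + 1 := by linarith
  have hgIoc : IntegrableOn (fun t => g t ^ 2) (Ioc b (b + 1)) :=
    (integrableOn_Ioc_iff_integrableOn_Ioo (by finiteness)).2 hg
  obtain ⟨g', hg', hsq, hvg'⟩ := exists_intervalIntegrable_of_integrableOn_sq hbb hv hgIoc hvg
  have hg2 : IntervalIntegrable (fun t => g t ^ 2) volume b (b + 1) :=
    (intervalIntegrable_iff_integrableOn_Ioc_of_le hbb).2 hgIoc
  have hg'2 : IntervalIntegrable (fun t => g' t ^ 2) volume b (b + 1) :=
    hg2.mono_fun (hg'.def'.aestronglyMeasurable.pow 2) (Filter.Eventually.of_forall fun t => by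
      simpa only [Real.norm_eq_abs, abs_pow, sq_abs] using hsq t)
  calc v c ^ 2 ≤ Phi b c * ∫ r in b..(b + 1), g' r ^ 2 * r :=
        sq_le_Phi_mul_integral_of_intervalIntegrable hb hc hg' hg'2 hvg' hmean
    _ ≤ Phi b c * ∫ r in b..(b + 1), g r ^ 2 * r := by
      gcongr ?_ * ?_
      · exact Phi_nonneg hb hc
      · refine intervalIntegral.integral_mono_on hbb (hg'2.mul_continuousOn continuousOn_id)
          (hg2.mul_continuousOn continuousOn_id) fun t ht => ?_
        exact mul_le_mul_of_nonneg_right (hsq t) (hb.le.trans ht.1)
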